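/- In a perfect REL-algebra, let a be an atom, and let N be the pre-network on nodes {x,y} (with x = y iff a ≤ 1') with edge (x,y) labeled a, edge (x,x) labeled Sa if 1';a ≠ 0, edge (y,y) labeled Ea if a;1' ≠ 0, and edge (y,x) labeled a⌣ if a⌣ ≠ 0. Then N is a network: (N1a) an edge's label is ≤ 1' iff its endpoints coincide; (N1b) for each edge (p,q), 1';N(p,q) ≠ 0 iff (p,p) is an edge; (N1c) N(p,q);1' ≠ 0 iff (q,q) is an edge; (N1d) N(p,q)⌣ ≠ 0 iff (q,p) is an edge; (N2) if (p,q) and (q,p) are both edges, then N(p,q)·(N(q,p)⌣) ≠ 0; (N3) if (p,q), (p,r), (r,q) are all edges, then N(p,q)·(N(p,r);N(r,q)) ≠ 0. -/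
import Mathlib

class PerfectREL (α : Type*) [CompleteBooleanAlgebra α] [IsAtomic α] where
  comp : α → α → α
  conv : α → α
  id' : α
  ax2 : ∀ x y : α, conv (x ⊓ conv y) = conv x ⊓ y
  ax3l : ∀ x y z : α, comp (x ⊔ y) z = comp x z ⊔ comp y z
  ax3r : ∀ x y z : α, comp x (y ⊔ z) = comp x y ⊔ comp x z
  ax4l : comp (⊤ : α) ⊥ = ⊥
  ax4r : comp (⊥ : α) ⊤ = ⊥
  ax5l : ∀ x y z : α, comp (conv x) y ⊓ z = comp (conv x) (y ⊓ comp (conv (conv x)) z) ⊓ z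
  ax5r : ∀ x y z : α, comp x (conv y) ⊓ z = comp (x ⊓ comp z (conv (conv y))) (conv y) ⊓ z
  ax6l : ∀ x : α, comp id' x ≤ x
  ax6r : ∀ x : α, comp x id' ≤ x
  ax7 : comp (id' : α) id' = id'
  ax8 : comp ((conv (⊤ : α))ᶜ) ((conv (⊤ : α))ᶜ) ⊓ id' = ⊥
  ax9a : ∀ x y z : α, comp (comp (x ⊓ id') y) z = comp (x ⊓ id') (comp y z)
  ax9b : ∀ x y z : α, comp (comp x (y ⊓ id')) z = comp x (comp (y ⊓ id') z)
  ax9c : ∀ x y z : α, comp (comp x y) (z ⊓ id') = comp x (comp y (z ⊓ id'))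
  conv_sSup : ∀ S : Set α, conv (sSup S) = ⨆ x ∈ S, conv x
  comp_sSup_left : ∀ (S : Set α) (y : α), comp (sSup S) y = ⨆ x ∈ S, comp x y
  comp_sSup_right : ∀ (x : α) (S : Set α), comp x (sSup S) = ⨆ y ∈ S, comp x y

open PerfectREL
set_option linter.unusedSectionVars false
set_option linter.unusedVariables false

variable {α : Type*} [CompleteBooleanAlgebra α] [IsAtomic α] [PerfectREL α]

lemma pr_conv_bot : conv (⊥ : α) = ⊥ := by simpa using conv_sSup (∅ : Set α)

lemma pr_comp_bot_left (y : α) : comp ⊥ y = ⊥ := by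
  simpa using comp_sSup_left (∅ : Set α) y

lemma pr_comp_bot_right (x : α) : comp x ⊥ = ⊥ := by
  simpa using comp_sSup_right x (∅ : Set α)

lemma pr_conv_sup (x y : α) : conv (x ⊔ y) = conv x ⊔ conv y := by
  have h := conv_sSup ({x, y} : Set α)
  rwa [sSup_pair, iSup_pair] at h

lemma pr_conv_mono {x y : α} (h : x ≤ y) : conv x ≤ conv y := by
  have h1 : conv (x ⊔ y) = conv x ⊔ conv y := pr_conv_sup x y
  rw [sup_eq_right.2 h] at h1
  exact le_trans le_sup_left h1.symm.le

lemma pr_comp_mono_left {x y : α} (h : x ≤ y) (z : α) : comp x z ≤ comp y z := by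
  have h1 := ax3l x y z
  rw [sup_eq_right.2 h] at h1
  exact le_trans le_sup_left h1.symm.le

lemma pr_comp_mono_right (x : α) {y z : α} (h : y ≤ z) : comp x y ≤ comp x z := by
  have h1 := ax3r x y z
  rw [sup_eq_right.2 h] at h1
  exact le_trans le_sup_left h1.symm.le

lemma pr_cc (x : α) : conv (conv x) = conv ⊤ ⊓ x := by simpa using ax2 ⊤ x

lemma pr_conv_le_t (x : α) : conv x ≤ conv (⊤ : α) := pr_conv_mono le_top

lemma pr_cc_of_le {x : α} (h : x ≤ conv ⊤) : conv (conv x) = x := by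
  rw [pr_cc]; exact inf_eq_right.2 h

lemma pr_conv_ne {x : α} (h : x ≤ conv ⊤) (hx : x ≠ ⊥) : conv x ≠ ⊥ := fun h0 =>
  hx (by rw [← pr_cc_of_le h, h0, pr_conv_bot])

lemma pr_conv_inf_t (x : α) : conv (x ⊓ conv ⊤) = conv x := by simpa using ax2 x ⊤

lemma pr_Dl {u : α} (hu : u ≤ conv ⊤) (y z : α) :
    comp u y ⊓ z = comp u (y ⊓ comp (conv u) z) ⊓ z := by
  have h1 := pr_cc_of_le hu
  have h2 : conv (conv (conv u)) = conv u := pr_cc_of_le (pr_conv_le_t u)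
  have h3 := ax5l (conv u) y z
  rw [h2, h1] at h3
  exact h3

lemma pr_Dr {v : α} (hv : v ≤ conv ⊤) (x z : α) :
    comp x v ⊓ z = comp (x ⊓ comp z (conv v)) v ⊓ z := by
  have h1 := pr_cc_of_le hv
  have h2 : conv (conv (conv v)) = conv v := pr_cc_of_le (pr_conv_le_t v)
  have h3 := ax5r x (conv v) z
  rw [h2, h1] at h3
  exact h3

lemma pr_Pl {u : α} (hu : u ≤ conv ⊤) {y z : α} (h : comp u y ⊓ z ≠ ⊥) :
    y ⊓ comp (conv u) z ≠ ⊥ := by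
  intro h0
  apply h
  rw [pr_Dl hu y z, h0, pr_comp_bot_right]
  simp

lemma pr_Pr {v : α} (hv : v ≤ conv ⊤) {x z : α} (h : comp x v ⊓ z ≠ ⊥) :
    x ⊓ comp z (conv v) ≠ ⊥ := by
  intro h0
  apply h
  rw [pr_Dr hv x z, h0, pr_comp_bot_left]
  simp

lemma pr_sSup_atoms (b : α) : sSup {a : α | IsAtom a ∧ a ≤ b} = b := by
  letI : CompleteAtomicBooleanAlgebra α := CompleteBooleanAlgebra.toCompleteAtomicBooleanAlgebra
  exact sSup_atoms_le_eq b

lemma pr_le_atom {a b : α} (ha : IsAtom a) (h : b ≤ a) (hb : b ≠ ⊥) : b = a :=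
  (ha.le_iff_eq hb).mp h

lemma pr_atom_eq_of_inf_ne {a b : α} (ha : IsAtom a) (hb : IsAtom b) (h : a ⊓ b ≠ ⊥) :
    a = b := by
  have h1 : a ⊓ b = a := pr_le_atom ha inf_le_left h
  exact pr_le_atom hb (inf_eq_left.mp h1) ha.1

lemma pr_comp_le_of_right {x y : α} (h : y ≤ id') : comp x y ≤ x :=
  le_trans (pr_comp_mono_right x h) (ax6r x)

lemma pr_comp_le_of_left {x y : α} (h : x ≤ id') : comp x y ≤ y :=
  le_trans (pr_comp_mono_left h y) (ax6l y)

lemma pr_sq {e : α} (he : IsAtom e) (hle : e ≤ id') : comp e e = e := by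
  have hA : sSup {a : α | IsAtom a ∧ a ≤ id'} = id' := pr_sSup_atoms _
  have h1 : comp (id' : α) id' = ⨆ g ∈ {a : α | IsAtom a ∧ a ≤ id'},
      ⨆ f ∈ {a : α | IsAtom a ∧ a ≤ id'}, comp g f := by
    conv_lhs => rw [← hA, comp_sSup_left]
    exact iSup_congr fun g => iSup_congr fun _ => comp_sSup_right g _
  have h2 : e = ⨆ g ∈ {a : α | IsAtom a ∧ a ≤ id'},
      ⨆ f ∈ {a : α | IsAtom a ∧ a ≤ id'}, (e ⊓ comp g f) := by
    conv_lhs => rw [← inf_eq_left.2 hle, ← ax7, h1]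
    simp [inf_iSup_eq]
  have h3 : ∃ g, (IsAtom g ∧ g ≤ id') ∧ ∃ f, (IsAtom f ∧ f ≤ id') ∧ e ⊓ comp g f ≠ ⊥ := by
    by_contra hc
    push_neg at hc
    apply he.1
    rw [h2]
    apply le_bot_iff.1
    refine iSup₂_le fun g hg => iSup₂_le fun f hf => ?_
    rw [hc g hg f hf]
  obtain ⟨g, hg, f, hf, hne⟩ := h3
  have hgf : comp g f ≤ g ⊓ f := le_inf (pr_comp_le_of_right hf.2) (pr_comp_le_of_left hg.2)
  have hne2 : g ⊓ f ≠ ⊥ := fun h0 => hne (le_bot_iff.1 (le_trans inf_le_right (h0 ▸ hgf)))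
  have hgfe : g = f := pr_atom_eq_of_inf_ne hg.1 hf.1 hne2
  subst hgfe
  have heg : e = g := by
    apply pr_atom_eq_of_inf_ne he hg.1
    intro h0
    exact hne (le_bot_iff.1 (le_trans (inf_le_inf_left e (le_trans hgf inf_le_left)) h0.le))
  subst heg
  have h4 : comp e e ≠ ⊥ := fun h0 => hne (by rw [h0]; simp)
  exact pr_le_atom he (le_trans hgf inf_le_left) h4

lemma pr_id_le_t : (id' : α) ≤ conv ⊤ := by
  conv_lhs => rw [← pr_sSup_atoms (id' : α)]
  apply sSup_le
  rintro e ⟨he, hle⟩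
  by_contra hnot
  have h1 : e ⊓ conv ⊤ = ⊥ := by
    rcases he.le_iff.mp (inf_le_left : e ⊓ conv (⊤ : α) ≤ e) with h | h
    · exact h
    · exact absurd (inf_eq_left.mp h) hnot
  have h2 : e ≤ (conv (⊤ : α))ᶜ := (disjoint_iff.2 h1).le_compl_right
  have h3 : e ≤ comp ((conv (⊤ : α))ᶜ) ((conv (⊤ : α))ᶜ) := by
    rw [← pr_sq he hle]
    exact le_trans (pr_comp_mono_left h2 e) (pr_comp_mono_right _ h2)
  exact he.1 (le_bot_iff.1 (le_trans (le_inf h3 hle) (ax8 (α := α)).le))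

lemma pr_conv_atom_id {e : α} (he : IsAtom e) (hle : e ≤ id') : conv e = e := by
  have het : e ≤ conv (⊤ : α) := hle.trans pr_id_le_t
  have h1 : comp e e ⊓ e ≠ ⊥ := by rw [pr_sq he hle]; simpa using he.1
  have h2 := pr_Pl het h1
  have h3 : e ⊓ conv e ≠ ⊥ := fun h0 =>
    h2 (le_bot_iff.1 (le_trans (inf_le_inf_left e (pr_comp_le_of_right hle)) h0.le))
  have h4 : e ≤ conv e := inf_eq_left.mp (pr_le_atom he inf_le_left h3)
  exact le_antisymm (le_trans (pr_conv_mono h4) (pr_cc_of_le het).le) h4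

lemma pr_conv_isAtom {a : α} (ha : IsAtom a) (hat : a ≤ conv ⊤) : IsAtom (conv a) := by
  constructor
  · exact pr_conv_ne hat ha.1
  · intro b hb
    by_contra hb0
    have hbt : b ≤ conv (⊤ : α) := le_trans hb.le (pr_conv_le_t a)
    have h1 : conv b ≠ ⊥ := pr_conv_ne hbt hb0
    have h2 : conv b ≤ a := le_trans (pr_conv_mono hb.le) (pr_cc_of_le hat).le
    have h3 : conv b = a := pr_le_atom ha h2 h1
    exact hb.ne (by rw [← pr_cc_of_le hbt, h3])

lemma pr_atom_le_t_of_conv_ne {a : α} (ha : IsAtom a) (h : conv a ≠ ⊥) : a ≤ conv ⊤ := by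
  by_contra hn
  apply h
  have h1 : a ⊓ conv (⊤ : α) = ⊥ := by
    rcases ha.le_iff.mp (inf_le_left : a ⊓ conv (⊤ : α) ≤ a) with h | h
    · exact h
    · exact absurd (inf_eq_left.mp h) hn
  rw [← pr_conv_inf_t a, h1, pr_conv_bot]

lemma pr_key {b g : α} (hb : IsAtom b) (hbt : b ≤ conv ⊤) (hg : IsAtom g) (hgl : g ≤ id') :
    comp b g ≠ ⊥ ↔ comp g (conv b) ≠ ⊥ := by
  have hcb : conv (conv b) = b := pr_cc_of_le hbt
  have hct : conv b ≤ conv (⊤ : α) := pr_conv_le_t b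
  constructor
  · intro h
    have h1 : comp b g ⊓ b ≠ ⊥ := by rwa [inf_eq_left.2 (pr_comp_le_of_right hgl)]
    have h2 := pr_Pl hbt h1
    have h3 : comp (conv b) b ⊓ g ≠ ⊥ := by rwa [inf_comm] at h2
    have h4 := pr_Pr hbt h3
    intro h0
    apply h4
    rw [h0]
    simp
  · intro h
    have h1 : comp g (conv b) ⊓ conv b ≠ ⊥ := by rwa [inf_eq_left.2 (pr_comp_le_of_left hgl)]
    have h2 := pr_Pr hct h1
    rw [hcb] at h2
    have h3 : comp (conv b) b ⊓ g ≠ ⊥ := by rwa [inf_comm] at h2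
    have h4 := pr_Pl hct h3
    rw [hcb] at h4
    intro h0
    apply h4
    rw [h0]
    simp

lemma pr_comp_id_ne_iff_exists (x : α) :
    comp x id' ≠ ⊥ ↔ ∃ g, IsAtom g ∧ g ≤ id' ∧ comp x g ≠ ⊥ := by
  have e1 : sSup {a : α | IsAtom a ∧ a ≤ id'} = id' := pr_sSup_atoms _
  have h : comp x (id' : α) = ⨆ g ∈ {a : α | IsAtom a ∧ a ≤ id'}, comp x g := by
    conv_lhs => rw [← e1]
    exact comp_sSup_right x _
  rw [h]
  constructor
  · intro hne
    by_contra hc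
    push_neg at hc
    apply hne
    apply le_bot_iff.1
    refine iSup₂_le fun g hg => ?_
    rw [hc g hg.1 hg.2]
  · rintro ⟨g, h1, h2, h3⟩ h0
    apply h3
    apply le_bot_iff.1
    calc comp x g ≤ _ := le_iSup₂ (f := fun g (_ : g ∈ {a : α | IsAtom a ∧ a ≤ id'}) => comp x g) g ⟨h1, h2⟩
    _ = ⊥ := h0

lemma pr_id_comp_ne_iff_exists (x : α) :
    comp id' x ≠ ⊥ ↔ ∃ g, IsAtom g ∧ g ≤ id' ∧ comp g x ≠ ⊥ := by
  have e1 : sSup {a : α | IsAtom a ∧ a ≤ id'} = id' := pr_sSup_atoms _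
  have h : comp (id' : α) x = ⨆ g ∈ {a : α | IsAtom a ∧ a ≤ id'}, comp g x := by
    conv_lhs => rw [← e1]
    exact comp_sSup_left _ x
  rw [h]
  constructor
  · intro hne
    by_contra hc
    push_neg at hc
    apply hne
    apply le_bot_iff.1
    refine iSup₂_le fun g hg => ?_
    rw [hc g hg.1 hg.2]
  · rintro ⟨g, h1, h2, h3⟩ h0
    apply h3
    apply le_bot_iff.1
    calc comp g x ≤ _ := le_iSup₂ (f := fun g (_ : g ∈ {a : α | IsAtom a ∧ a ≤ id'}) => comp g x) g ⟨h1, h2⟩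
    _ = ⊥ := h0

lemma pr_key2 {b : α} (hb : IsAtom b) (hbt : b ≤ conv ⊤) :
    comp b id' ≠ ⊥ ↔ comp id' (conv b) ≠ ⊥ := by
  rw [pr_comp_id_ne_iff_exists, pr_id_comp_ne_iff_exists]
  exact exists_congr fun g =>
    and_congr_right fun hg => and_congr_right fun hgl => pr_key hb hbt hg hgl

lemma pr_key3 {b : α} (hb : IsAtom b) (hbt : b ≤ conv ⊤) :
    comp (conv b) id' ≠ ⊥ ↔ comp id' b ≠ ⊥ := by
  have h := pr_key2 (pr_conv_isAtom hb hbt) (pr_conv_le_t b)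
  rwa [pr_cc_of_le hbt] at h

lemma pr_id_comp_ne {a : α} (ha : IsAtom a) (hle : a ≤ id') : comp id' a ≠ ⊥ := by
  have h : a ≤ comp id' a := by
    calc a = comp a a := (pr_sq ha hle).symm
    _ ≤ comp id' a := pr_comp_mono_left hle a
  exact fun h0 => ha.1 (le_bot_iff.1 (h0 ▸ h))

lemma pr_comp_id_ne {a : α} (ha : IsAtom a) (hle : a ≤ id') : comp a id' ≠ ⊥ := by
  have h : a ≤ comp a id' := by
    calc a = comp a a := (pr_sq ha hle).symm
    _ ≤ comp a id' := pr_comp_mono_right a hle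
  exact fun h0 => ha.1 (le_bot_iff.1 (h0 ▸ h))

lemma pr_n3_xxy {a e : α} (ha : IsAtom a) (hat : a ≤ conv ⊤) (hea : comp e a = a) :
    e ⊓ comp a (conv a) ≠ ⊥ :=
  pr_Pr hat (by rw [hea]; simpa using ha.1)

lemma pr_n3_yyx {a f : α} (ha : IsAtom a) (hat : a ≤ conv ⊤) (haf : comp a f = a) :
    f ⊓ comp (conv a) a ≠ ⊥ :=
  pr_Pl hat (by rw [haf]; simpa using ha.1)

lemma pr_n3_yxy {a f : α} (ha : IsAtom a) (hat : a ≤ conv ⊤) (haf : comp a f = a) :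
    conv a ⊓ comp f (conv a) ≠ ⊥ := by
  have h := pr_n3_yyx ha hat haf
  rw [inf_comm] at h
  exact pr_Pr hat h

lemma pr_n3_yxx {a e : α} (ha : IsAtom a) (hat : a ≤ conv ⊤) (hea : comp e a = a) :
    conv a ⊓ comp (conv a) e ≠ ⊥ := by
  have h := pr_n3_xxy ha hat hea
  rw [inf_comm] at h
  exact pr_Pl hat h
theorem atom_network (a : α) (ha : IsAtom a)
    (V : Type*) (x y : V) (hxy : x = y ↔ a ≤ id')
    (E : Set (V × V)) (L : V → V → α)
    (hE : E = {p : V × V | p = (x, y) ∨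
      (p = (x, x) ∧ comp id' a ≠ (⊥ : α)) ∨
      (p = (y, y) ∧ comp a id' ≠ (⊥ : α)) ∨
      (p = (y, x) ∧ conv a ≠ (⊥ : α))})
    (hLxy : L x y = a)
    (hLxx : comp id' a ≠ (⊥ : α) →
      IsAtom (L x x) ∧ L x x ≤ id' ∧ comp (L x x) a = a)
    (hLyy : comp a id' ≠ (⊥ : α) →
      IsAtom (L y y) ∧ L y y ≤ id' ∧ comp a (L y y) = a)
    (hLyx : conv a ≠ (⊥ : α) → L y x = conv a) :
    (∀ p q : V, (p, q) ∈ E → (L p q ≤ id' ↔ p = q)) ∧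
    (∀ p q : V, (p, q) ∈ E → (comp id' (L p q) ≠ (⊥ : α) ↔ (p, p) ∈ E)) ∧
    (∀ p q : V, (p, q) ∈ E → (comp (L p q) id' ≠ (⊥ : α) ↔ (q, q) ∈ E)) ∧
    (∀ p q : V, (p, q) ∈ E → (conv (L p q) ≠ (⊥ : α) ↔ (q, p) ∈ E)) ∧
    (∀ p q : V, (p, q) ∈ E → (q, p) ∈ E → L p q ⊓ conv (L q p) ≠ (⊥ : α)) ∧
    (∀ p q r : V, (p, q) ∈ E → (p, r) ∈ E → (r, q) ∈ E →
      L p q ⊓ comp (L p r) (L r q) ≠ (⊥ : α)) := by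
  by_cases hxy' : x = y
  · -- degenerate case: x = y, a ≤ id'
    subst hxy'
    have haid : a ≤ id' := hxy.mp rfl
    have hsq : comp a a = a := pr_sq ha haid
    have hconv : conv a = a := pr_conv_atom_id ha haid
    have hmem : ∀ p q : V, (p, q) ∈ E → p = x ∧ q = x := by
      intro p q hpq
      rw [hE] at hpq
      simp only [Set.mem_setOf_eq, Prod.mk.injEq] at hpq
      tauto
    have hmemx : (x, x) ∈ E := by rw [hE]; left; rfl
    have hSne : comp id' a ≠ (⊥ : α) := pr_id_comp_ne ha haid
    have hTne : comp a id' ≠ (⊥ : α) := pr_comp_id_ne ha haid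
    refine ⟨?_, ?_, ?_, ?_, ?_, ?_⟩
    · intro p q hpq
      obtain ⟨rfl, rfl⟩ := hmem p q hpq
      rw [hLxy]
      exact iff_of_true haid rfl
    · intro p q hpq
      obtain ⟨rfl, rfl⟩ := hmem p q hpq
      rw [hLxy]
      exact iff_of_true hSne hmemx
    · intro p q hpq
      obtain ⟨rfl, rfl⟩ := hmem p q hpq
      rw [hLxy]
      exact iff_of_true hTne hmemx
    · intro p q hpq
      obtain ⟨rfl, rfl⟩ := hmem p q hpq
      rw [hLxy, hconv]
      exact iff_of_true ha.1 hmemx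
    · intro p q h1 h2
      obtain ⟨rfl, rfl⟩ := hmem p q h1
      rw [hLxy, hconv]
      simpa using ha.1
    · intro p q r h1 h2 h3
      obtain ⟨rfl, rfl⟩ := hmem p q h1
      obtain ⟨_, rfl⟩ := hmem _ _ h2
      rw [hLxy, hsq]
      simpa using ha.1
  · -- main case: x ≠ y
    have hne : x ≠ y := hxy'
    have hnle : ¬ a ≤ id' := fun h => hne (hxy.mpr h)
    have hmxy : (x, y) ∈ E := by rw [hE]; left; rfl
    have hmxx : comp id' a ≠ (⊥ : α) → (x, x) ∈ E := fun h => by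
      rw [hE]; right; left; exact ⟨rfl, h⟩
    have hmyy : comp a id' ≠ (⊥ : α) → (y, y) ∈ E := fun h => by
      rw [hE]; right; right; left; exact ⟨rfl, h⟩
    have hmyx : conv a ≠ (⊥ : α) → (y, x) ∈ E := fun h => by
      rw [hE]; right; right; right; exact ⟨rfl, h⟩
    have hxxS : (x, x) ∈ E → comp id' a ≠ (⊥ : α) := by
      intro h
      rw [hE] at h
      simp only [Set.mem_setOf_eq, Prod.mk.injEq] at h
      rcases h with ⟨_, h⟩ | ⟨_, h⟩ | ⟨⟨h, _⟩, _⟩ | ⟨⟨h, _⟩, _⟩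
      · exact absurd h hne
      · exact h
      · exact absurd h hne
      · exact absurd h hne
    have hyyT : (y, y) ∈ E → comp a id' ≠ (⊥ : α) := by
      intro h
      rw [hE] at h
      simp only [Set.mem_setOf_eq, Prod.mk.injEq] at h
      rcases h with ⟨h, _⟩ | ⟨⟨h, _⟩, _⟩ | ⟨_, h⟩ | ⟨⟨_, h⟩, _⟩
      · exact absurd h.symm hne
      · exact absurd h.symm hne
      · exact h
      · exact absurd h.symm hne
    have hyxC : (y, x) ∈ E → conv a ≠ (⊥ : α) := by
      intro h
      rw [hE] at h
      simp only [Set.mem_setOf_eq, Prod.mk.injEq] at h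
      rcases h with ⟨h, _⟩ | ⟨⟨h, _⟩, _⟩ | ⟨⟨_, h⟩, _⟩ | ⟨_, h⟩
      · exact absurd h.symm hne
      · exact absurd h.symm hne
      · exact absurd h hne
      · exact h
    refine ⟨?_, ?_, ?_, ?_, ?_, ?_⟩
    · -- N1a
      intro p q hpq
      rw [hE] at hpq
      simp only [Set.mem_setOf_eq, Prod.mk.injEq] at hpq
      rcases hpq with ⟨rfl, rfl⟩ | ⟨⟨rfl, rfl⟩, hS⟩ | ⟨⟨rfl, rfl⟩, hT⟩ | ⟨⟨rfl, rfl⟩, hC⟩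
      · rw [hLxy]; exact iff_of_false hnle hne
      · exact iff_of_true (hLxx hS).2.1 rfl
      · exact iff_of_true (hLyy hT).2.1 rfl
      · rw [hLyx hC]
        have hat : a ≤ conv (⊤ : α) := pr_atom_le_t_of_conv_ne ha hC
        refine iff_of_false ?_ (Ne.symm hne)
        intro hle
        apply hnle
        have h1 : conv (conv a) = conv a :=
          pr_conv_atom_id (pr_conv_isAtom ha hat) hle
        rw [pr_cc_of_le hat] at h1
        rw [h1]
        exact hle
    · -- N1b
      intro p q hpq
      rw [hE] at hpq
      simp only [Set.mem_setOf_eq, Prod.mk.injEq] at hpq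
      rcases hpq with ⟨rfl, rfl⟩ | ⟨⟨rfl, rfl⟩, hS⟩ | ⟨⟨rfl, rfl⟩, hT⟩ | ⟨⟨rfl, rfl⟩, hC⟩
      · rw [hLxy]; exact ⟨hmxx, hxxS⟩
      · obtain ⟨heA, heI, _⟩ := hLxx hS
        exact iff_of_true (pr_id_comp_ne heA heI) (hmxx hS)
      · obtain ⟨hfA, hfI, _⟩ := hLyy hT
        exact iff_of_true (pr_id_comp_ne hfA hfI) (hmyy hT)
      · rw [hLyx hC]
        have hat : a ≤ conv (⊤ : α) := pr_atom_le_t_of_conv_ne ha hC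
        exact Iff.trans (pr_key2 ha hat).symm ⟨hmyy, hyyT⟩
    · -- N1c
      intro p q hpq
      rw [hE] at hpq
      simp only [Set.mem_setOf_eq, Prod.mk.injEq] at hpq
      rcases hpq with ⟨rfl, rfl⟩ | ⟨⟨rfl, rfl⟩, hS⟩ | ⟨⟨rfl, rfl⟩, hT⟩ | ⟨⟨rfl, rfl⟩, hC⟩
      · rw [hLxy]; exact ⟨hmyy, hyyT⟩
      · obtain ⟨heA, heI, _⟩ := hLxx hS
        exact iff_of_true (pr_comp_id_ne heA heI) (hmxx hS)
      · obtain ⟨hfA, hfI, _⟩ := hLyy hT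
        exact iff_of_true (pr_comp_id_ne hfA hfI) (hmyy hT)
      · rw [hLyx hC]
        have hat : a ≤ conv (⊤ : α) := pr_atom_le_t_of_conv_ne ha hC
        exact Iff.trans (pr_key3 ha hat) ⟨hmxx, hxxS⟩
    · -- N1d
      intro p q hpq
      rw [hE] at hpq
      simp only [Set.mem_setOf_eq, Prod.mk.injEq] at hpq
      rcases hpq with ⟨rfl, rfl⟩ | ⟨⟨rfl, rfl⟩, hS⟩ | ⟨⟨rfl, rfl⟩, hT⟩ | ⟨⟨rfl, rfl⟩, hC⟩
      · rw [hLxy]; exact ⟨hmyx, hyxC⟩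
      · obtain ⟨heA, heI, _⟩ := hLxx hS
        refine iff_of_true ?_ (hmxx hS)
        rw [pr_conv_atom_id heA heI]
        exact heA.1
      · obtain ⟨hfA, hfI, _⟩ := hLyy hT
        refine iff_of_true ?_ (hmyy hT)
        rw [pr_conv_atom_id hfA hfI]
        exact hfA.1
      · rw [hLyx hC]
        have hat : a ≤ conv (⊤ : α) := pr_atom_le_t_of_conv_ne ha hC
        refine iff_of_true ?_ hmxy
        rw [pr_cc_of_le hat]
        exact ha.1
    · -- N2
      intro p q h1 h2
      rw [hE] at h1
      simp only [Set.mem_setOf_eq, Prod.mk.injEq] at h1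
      rcases h1 with ⟨rfl, rfl⟩ | ⟨⟨rfl, rfl⟩, hS⟩ | ⟨⟨rfl, rfl⟩, hT⟩ | ⟨⟨rfl, rfl⟩, hC⟩
      · have hC := hyxC h2
        have hat : a ≤ conv (⊤ : α) := pr_atom_le_t_of_conv_ne ha hC
        rw [hLxy, hLyx hC, pr_cc_of_le hat]
        simpa using ha.1
      · obtain ⟨heA, heI, _⟩ := hLxx hS
        rw [pr_conv_atom_id heA heI]
        simpa using heA.1
      · obtain ⟨hfA, hfI, _⟩ := hLyy hT
        rw [pr_conv_atom_id hfA hfI]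
        simpa using hfA.1
      · have hat : a ≤ conv (⊤ : α) := pr_atom_le_t_of_conv_ne ha hC
        rw [hLyx hC, hLxy]
        simpa using pr_conv_ne hat ha.1
    · -- N3
      intro p q r h1 h2 h3
      rw [hE] at h1 h2 h3
      simp only [Set.mem_setOf_eq, Prod.mk.injEq] at h1 h2 h3
      rcases h1 with ⟨rfl, rfl⟩ | ⟨⟨rfl, rfl⟩, hS⟩ | ⟨⟨rfl, rfl⟩, hT⟩ | ⟨⟨rfl, rfl⟩, hC⟩
      · -- (p,q) = (x,y)
        rcases h2 with ⟨_, rfl⟩ | ⟨⟨_, rfl⟩, hS⟩ | ⟨⟨h0, _⟩, _⟩ | ⟨⟨h0, _⟩, _⟩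
        · rcases h3 with ⟨h0, _⟩ | ⟨⟨h0, _⟩, _⟩ | ⟨_, hT⟩ | ⟨⟨_, h0⟩, _⟩
          · exact absurd h0.symm hne
          · exact absurd h0.symm hne
          · obtain ⟨_, _, haf⟩ := hLyy hT
            rw [hLxy, haf]
            simpa using ha.1
          · exact absurd h0.symm hne
        · obtain ⟨_, _, hea⟩ := hLxx hS
          rw [hLxy, hea]
          simpa using ha.1
        · exact absurd h0 hne
        · exact absurd h0 hne
      · -- (p,q) = (x,x), S
        obtain ⟨heA, heI, hea⟩ := hLxx hS
        rcases h2 with ⟨_, rfl⟩ | ⟨⟨_, rfl⟩, _⟩ | ⟨⟨h0, _⟩, _⟩ | ⟨⟨h0, _⟩, _⟩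
        · rcases h3 with ⟨h0, _⟩ | ⟨⟨h0, _⟩, _⟩ | ⟨⟨_, h0⟩, _⟩ | ⟨_, hC⟩
          · exact absurd h0.symm hne
          · exact absurd h0.symm hne
          · exact absurd h0 hne
          · have hat : a ≤ conv (⊤ : α) := pr_atom_le_t_of_conv_ne ha hC
            rw [hLxy, hLyx hC]
            exact pr_n3_xxy ha hat hea
        · rw [pr_sq heA heI]
          simpa using heA.1
        · exact absurd h0 hne
        · exact absurd h0 hne
      · -- (p,q) = (y,y), T
        obtain ⟨hfA, hfI, haf⟩ := hLyy hT
        rcases h2 with ⟨h0, _⟩ | ⟨⟨h0, _⟩, _⟩ | ⟨⟨_, rfl⟩, _⟩ | ⟨⟨_, rfl⟩, hC⟩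
        · exact absurd h0.symm hne
        · exact absurd h0.symm hne
        · rw [pr_sq hfA hfI]
          simpa using hfA.1
        · have hat : a ≤ conv (⊤ : α) := pr_atom_le_t_of_conv_ne ha hC
          rw [hLyx hC, hLxy]
          exact pr_n3_yyx ha hat haf
      · -- (p,q) = (y,x), C
        have hat : a ≤ conv (⊤ : α) := pr_atom_le_t_of_conv_ne ha hC
        rcases h2 with ⟨h0, _⟩ | ⟨⟨h0, _⟩, _⟩ | ⟨⟨_, rfl⟩, hT⟩ | ⟨⟨_, rfl⟩, _⟩
        · exact absurd h0.symm hne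
        · exact absurd h0.symm hne
        · obtain ⟨hfA, hfI, haf⟩ := hLyy hT
          rw [hLyx hC]
          exact pr_n3_yxy ha hat haf
        · rcases h3 with ⟨_, h0⟩ | ⟨_, hS⟩ | ⟨⟨h0, _⟩, _⟩ | ⟨⟨h0, _⟩, _⟩
          · exact absurd h0 hne
          · obtain ⟨heA, heI, hea⟩ := hLxx hS
            rw [hLyx hC]
            exact pr_n3_yxx ha hat hea
          · exact absurd h0 hne
          · exact absurd h0 hne
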